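/- Let l and m be positive integers with l | m, and let r be an integer with l ∤ r. Then [r]_l = ∏_s [s]_m, where s runs over a complete set of representatives of the residue classes modulo m that are congruent to r modulo l (each such s is not divisible by m, and the product does not depend on the choice of representatives). -/

import Mathlib

open Complex Filter Topology UpperHalfPlane
open scoped Real

noncomputable section

/-- `B(x) = y² − y + 1/6` where `y` is the fractional part of `x`. -/
def bern (x : ℝ) : ℝ := Int.fract x ^ 2 - Int.fract x + 1 / 6


/-- The modular unit `[r]_l`. -/
def rl (l r : ℤ) : UpperHalfPlane → ℂ := fun z =>
  Complex.exp (2 * (π : ℂ) * Complex.I *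
      ((-((l : ℝ) * bern ((r : ℝ) / (l : ℝ)) / 2) : ℝ) : ℂ) * (z : ℂ)) *
    (∏' n : {n : ℤ // 0 < n ∧ n ≡ r [ZMOD l]},
      (1 - Complex.exp (2 * (π : ℂ) * Complex.I * ((n : ℤ) : ℂ) * (z : ℂ)))⁻¹) *
    (∏' n : {n : ℤ // 0 < n ∧ n ≡ -r [ZMOD l]},
      (1 - Complex.exp (2 * (π : ℂ) * Complex.I * ((n : ℤ) : ℂ) * (z : ℂ)))⁻¹)

lemma sum_quadratic (A B C : ℝ) (n : ℕ) :
    ∑ j ∈ Finset.range n, (A + B*j + C*(j:ℝ)^2)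
      = n*A + B*(n*(n-1)/2) + C*(n*(n-1)*(2*n-1)/6) := by
  induction n with
  | zero => simp
  | succ n ih => rw [Finset.sum_range_succ, ih]; push_cast; ring

lemma bern_dist (k : ℕ) (hk : 0 < k) (x : ℝ) :
    ∑ j ∈ Finset.range k, bern (x + j / k) = bern (k * x) / k := by
  have hk0 : (0:ℝ) < k := by exact_mod_cast hk
  have hx : ∀ j : ℕ, bern (x + j / k) = bern (Int.fract x + j / k) := by
    intro j
    have h : x + j / k = (⌊x⌋ : ℝ) + (Int.fract x + j / k) := by
      rw [Int.fract]; ring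
    rw [h]; unfold bern; rw [Int.fract_intCast_add]
  have hx2 : bern (k * x) = bern (k * Int.fract x) := by
    have h : (k:ℝ) * x = ((k * ⌊x⌋ : ℤ) : ℝ) + k * Int.fract x := by
      push_cast; rw [Int.fract]; ring
    rw [h]; unfold bern; rw [Int.fract_intCast_add]
  simp only [hx, hx2]
  set y := Int.fract x with hy
  have hy0 : 0 ≤ y := Int.fract_nonneg x
  have hy1 : y < 1 := Int.fract_lt_one x
  set a : ℤ := ⌊(k:ℝ) * y⌋ with ha
  have ha0 : 0 ≤ a := Int.floor_nonneg.mpr (by positivity)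
  have hak : a < (k:ℤ) := by
    rw [ha, Int.floor_lt]; push_cast; nlinarith
  have hale : (a:ℝ) ≤ k * y := Int.floor_le _
  have halt : (k:ℝ) * y < a + 1 := Int.lt_floor_add_one _
  set b : ℕ := k - a.toNat with hb
  have hatk : a.toNat ≤ k := by omega
  have hbk : b ≤ k := by omega
  have hbr : (b : ℝ) = k - a := by
    rw [hb, Nat.cast_sub hatk]
    rw [show ((a.toNat : ℕ) : ℝ) = ((a.toNat : ℤ) : ℝ) by push_cast; ring,
      Int.toNat_of_nonneg ha0]
  have hfr : Int.fract ((k:ℝ) * y) = k * y - a := by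
    rw [Int.fract, ← ha]
  have key : ∀ j ∈ Finset.range k, bern (y + j / k)
      = ((y^2 - y + 1/6) + (2*y/k - 1/k)*j + (1/k^2)*(j:ℝ)^2)
        + (if b ≤ j then ((2 - 2*y) + (-2/k)*j + 0*(j:ℝ)^2) else 0) := by
    intro j hj
    have hjk : j < k := Finset.mem_range.mp hj
    have hjkr : (j:ℝ) < k := by exact_mod_cast hjk
    have hjr0 : (0:ℝ) ≤ j := Nat.cast_nonneg j
    have hsplit : y + (j:ℝ) / k = (k*y + j)/k := by field_simp
    by_cases hbj : b ≤ j
    · have hbjr : (k:ℝ) - a ≤ j := by rw [← hbr]; exact_mod_cast hbj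
      have h1 : 1 ≤ y + (j:ℝ) / k := by
        rw [hsplit, le_div_iff₀ hk0]; nlinarith
      have h2 : y + (j:ℝ) / k < 2 := by
        rw [hsplit, div_lt_iff₀ hk0]; nlinarith
      have hfe : Int.fract (y + (j:ℝ)/k) = y + j/k - 1 := by
        rw [show y + (j:ℝ)/k = (y + j/k - 1) + ((1 : ℤ) : ℝ) by push_cast; ring]
        rw [Int.fract_add_intCast, Int.fract_eq_self.mpr ⟨by linarith, by linarith⟩]; push_cast; ring
      rw [if_pos hbj]; unfold bern; rw [hfe]; field_simp; ring
    · have hbjr : (j:ℝ) + 1 ≤ (k:ℝ) - a := by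
        rw [← hbr]; exact_mod_cast (by omega : j + 1 ≤ b)
      have h1 : 0 ≤ y + (j:ℝ)/k := by positivity
      have h2 : y + (j:ℝ)/k < 1 := by
        rw [hsplit, div_lt_iff₀ hk0]; nlinarith
      have hfe : Int.fract (y + (j:ℝ)/k) = y + j/k := Int.fract_eq_self.mpr ⟨h1, h2⟩
      rw [if_neg hbj]; unfold bern; rw [hfe]; field_simp; ring
  rw [Finset.sum_congr rfl key, Finset.sum_add_distrib, sum_quadratic]
  have hsite : ∑ j ∈ Finset.range k,
      (if b ≤ j then ((2 - 2*y) + (-2/k)*j + 0*(j:ℝ)^2) else 0)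
      = ∑ j ∈ Finset.range k, ((2 - 2*y) + (-2/k)*j + 0*(j:ℝ)^2)
        - ∑ j ∈ Finset.range b, ((2 - 2*y) + (-2/k)*j + 0*(j:ℝ)^2) := by
    rw [← Finset.sum_range_add_sum_Ico
      (fun j : ℕ => ((2 - 2*y) + (-2/k)*j + 0*(j:ℝ)^2)) hbk,
      ← Finset.sum_range_add_sum_Ico
      (fun j : ℕ => if b ≤ j then ((2 - 2*y) + (-2/k)*j + 0*(j:ℝ)^2) else 0) hbk]
    have e1 : ∑ j ∈ Finset.range b,
        (if b ≤ j then ((2 - 2*y) + (-2/k)*j + 0*(j:ℝ)^2) else 0) = 0 :=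
      Finset.sum_eq_zero fun j hj => if_neg (by simp at hj; omega)
    have e2 : ∑ j ∈ Finset.Ico b k,
        (if b ≤ j then ((2 - 2*y) + (-2/k)*j + 0*(j:ℝ)^2) else 0)
        = ∑ j ∈ Finset.Ico b k, ((2 - 2*y) + (-2/k)*j + 0*(j:ℝ)^2) :=
      Finset.sum_congr rfl fun j hj => if_pos (Finset.mem_Ico.mp hj).1
    rw [e1, e2]; ring
  rw [hsite, sum_quadratic, sum_quadratic]
  unfold bern
  rw [hfr, hbr]
  have hbne : (k:ℝ) ≠ 0 := ne_of_gt hk0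
  field_simp
  ring
lemma exists_unique_j (l k : ℕ) (hl : 0 < l) (hk : 0 < k) (ε a : ℤ) (hε : ε * ε = 1)
    (n : ℤ) (hn : n ≡ a [ZMOD (l:ℤ)]) :
    ∃! j : Fin k, n ≡ a + ε * l * ((j:ℕ):ℤ) [ZMOD ((l*k : ℕ):ℤ)] := by
  have hl0 : (0:ℤ) < l := by exact_mod_cast hl
  have hk0 : (0:ℤ) < k := by exact_mod_cast hk
  obtain ⟨t, ht⟩ : (l:ℤ) ∣ a - n := Int.ModEq.dvd hn
  set j0 : ℤ := (-(ε*t)) % k with hj0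
  have hj00 : 0 ≤ j0 := Int.emod_nonneg _ (ne_of_gt hk0)
  have hj0k : j0 < k := Int.emod_lt_of_pos _ hk0
  have hmod : j0 = -(ε*t) - k * ((-(ε*t))/k) := Int.emod_def _ _
  refine ⟨⟨j0.toNat, by omega⟩, ?_, ?_⟩
  · show n ≡ a + ε * l * ((j0.toNat : ℕ) : ℤ) [ZMOD ((l*k : ℕ):ℤ)]
    rw [Int.modEq_iff_dvd]
    refine ⟨-(ε * ((-(ε*t))/k)), ?_⟩
    push_cast [Int.toNat_of_nonneg hj00]
    linear_combination ε*l*hmod + ht - l*t*hε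
  · rintro ⟨j, hjk⟩ hj
    obtain ⟨u, hu⟩ : ((l*k : ℕ):ℤ) ∣ (a + ε * l * j) - n := Int.ModEq.dvd hj
    push_cast at hu
    have hju : (j:ℤ) = -(ε * t) + k * (ε*u) := by
      have hl' : (l:ℤ) ≠ 0 := ne_of_gt hl0
      have h0 : (l:ℤ) * ((j:ℤ) - (-(ε * t) + k * (ε*u))) = 0 := by
        linear_combination ε*hu - ε*ht - (l:ℤ)*(j:ℤ)*hε
      have := mul_eq_zero.mp h0
      rcases this with h | h
      · exact absurd h hl'
      · linarith
    have h1 : (j:ℤ) % k = j0 := by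
      rw [hju, Int.add_mul_emod_self_left, hj0]
    have h2 : (j:ℤ) % k = j := Int.emod_eq_of_lt (by positivity) (by exact_mod_cast hjk)
    apply Fin.ext
    simp only [Fin.val_mk]
    omega


lemma regroup (f : ℤ → ℂ) (l M k : ℕ) (a : ℤ) (c : ℕ → ℤ)
    (hc : ∀ (j : ℕ) (n : ℤ), n ≡ c j [ZMOD (M:ℤ)] → n ≡ a [ZMOD (l:ℤ)])
    (hcu : ∀ n : ℤ, n ≡ a [ZMOD (l:ℤ)] → ∃! j : Fin k, n ≡ c (j:ℕ) [ZMOD (M:ℤ)])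
    (hmul : Multipliable fun n : {n : ℤ // 0 < n ∧ n ≡ a [ZMOD (l:ℤ)]} => f n.val)
    (hmulT : ∀ j : ℕ,
      Multipliable fun n : {n : ℤ // 0 < n ∧ n ≡ c j [ZMOD (M:ℤ)]} => f n.val) :
    ∏' n : {n : ℤ // 0 < n ∧ n ≡ a [ZMOD (l:ℤ)]}, f n.val
      = ∏ j ∈ Finset.range k,
          ∏' n : {n : ℤ // 0 < n ∧ n ≡ c j [ZMOD (M:ℤ)]}, f n.val := by
  classical
  let T : Fin k → Type := fun j => {n : ℤ // 0 < n ∧ n ≡ c (j:ℕ) [ZMOD (M:ℤ)]}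
  let S := {n : ℤ // 0 < n ∧ n ≡ a [ZMOD (l:ℤ)]}
  let G : (Σ j : Fin k, T j) → S := fun p => ⟨p.2.val, p.2.prop.1, hc _ _ p.2.prop.2⟩
  have hGbij : Function.Bijective G := by
    constructor
    · rintro ⟨j, n, hn⟩ ⟨j', n', hn'⟩ h
      have hv : n = n' := congrArg Subtype.val h
      subst hv
      obtain ⟨j₀, _, hju⟩ := hcu n (hc _ _ hn.2)
      have hjj : j = j' := (hju j hn.2).trans (hju j' hn'.2).symm
      subst hjj
      rfl
    · rintro ⟨n, hn0, hna⟩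
      obtain ⟨j, hj, -⟩ := hcu n hna
      exact ⟨⟨j, n, hn0, hj⟩, rfl⟩
  let e : (Σ j : Fin k, T j) ≃ S := Equiv.ofBijective G hGbij
  have hmul' : Multipliable fun p : (Σ j : Fin k, T j) => f (G p).val :=
    e.multipliable_iff.mpr hmul
  calc ∏' n : S, f n.val
      = ∏' p : (Σ j : Fin k, T j), f (G p).val := (e.tprod_eq fun n : S => f n.val).symm
    _ = ∏' (j : Fin k), ∏' (nc : T j), f (G ⟨j, nc⟩).val :=
        Multipliable.tprod_sigma' (fun j => hmulT (j : ℕ)) hmul'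
    _ = ∏ j : Fin k, ∏' (nc : T j), f (G ⟨j, nc⟩).val := tprod_fintype _
    _ = ∏ j ∈ Finset.range k,
          ∏' n : {n : ℤ // 0 < n ∧ n ≡ c j [ZMOD (M:ℤ)]}, f n.val :=
        Fin.prod_univ_eq_prod_range
          (fun j : ℕ => ∏' n : {n : ℤ // 0 < n ∧ n ≡ c j [ZMOD (M:ℤ)]}, f n.val) k
lemma norm_q (z : UpperHalfPlane) (n : ℤ) (hn : 0 < n) :
    ‖Complex.exp (2 * (π : ℂ) * Complex.I * ((n : ℤ) : ℂ) * (z : ℂ))‖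
      = Real.exp (-(2 * π * z.im)) ^ n.toNat := by
  rw [Complex.norm_exp]
  have hre : (2 * (π : ℂ) * Complex.I * ((n : ℤ) : ℂ) * (z : ℂ)).re
      = (n.toNat : ℝ) * (-(2 * π * z.im)) := by
    have : ((n : ℤ) : ℂ) = ((n.toNat : ℝ) : ℂ) := by
      exact_mod_cast (Int.toNat_of_nonneg hn.le).symm
    rw [this]
    simp [Complex.mul_re, Complex.mul_im, UpperHalfPlane.coe_im, UpperHalfPlane.coe_re]
    ring_nf
  rw [hre, Real.exp_nat_mul]

lemma summable_log_aux (z : UpperHalfPlane) (P : ℤ → Prop) (hP : ∀ n, P n → 0 < n) :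
    Summable fun n : {n : ℤ // P n} =>
      Complex.log ((1 - Complex.exp (2 * (π : ℂ) * Complex.I * ((n : ℤ) : ℂ) * (z : ℂ)))⁻¹) := by
  set t : ℝ := Real.exp (-(2 * π * z.im)) with htdef
  have ht0 : 0 < t := Real.exp_pos _
  have ht1 : t < 1 := by
    rw [htdef, Real.exp_lt_one_iff]
    have := z.im_pos
    nlinarith [Real.pi_pos]
  set K : ℝ := 1 + t * (1 - t)⁻¹ / 2 with hK
  have hbound : ∀ n : {n : ℤ // P n},
      ‖Complex.log ((1 - Complex.exp (2 * (π : ℂ) * Complex.I * ((n : ℤ) : ℂ) * (z : ℂ)))⁻¹)‖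
        ≤ K * t ^ (n : ℤ).toNat := by
    rintro ⟨n, hn⟩
    have hn0 := hP n hn
    set w : ℂ := Complex.exp (2 * (π : ℂ) * Complex.I * ((n : ℤ) : ℂ) * (z : ℂ)) with hw
    have hwn : ‖w‖ = t ^ n.toNat := norm_q z n hn0
    have hN1 : 1 ≤ n.toNat := by omega
    have hwt : ‖w‖ ≤ t := by
      rw [hwn]
      calc t ^ n.toNat ≤ t ^ 1 := pow_le_pow_of_le_one ht0.le ht1.le hN1
        _ = t := pow_one t
    have hw1 : ‖w‖ < 1 := lt_of_le_of_lt hwt ht1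
    have h1 := Complex.norm_log_one_sub_inv_sub_self_le hw1
    have h2 : ‖Complex.log ((1 - w)⁻¹)‖ ≤ ‖w‖ ^ 2 * (1 - ‖w‖)⁻¹ / 2 + ‖w‖ := by
      calc ‖Complex.log ((1 - w)⁻¹)‖
          = ‖(Complex.log ((1 - w)⁻¹) - w) + w‖ := by rw [sub_add_cancel]
        _ ≤ ‖Complex.log ((1 - w)⁻¹) - w‖ + ‖w‖ := norm_add_le _ _
        _ ≤ ‖w‖ ^ 2 * (1 - ‖w‖)⁻¹ / 2 + ‖w‖ := by gcongr
    have hinv : (1 - ‖w‖)⁻¹ ≤ (1 - t)⁻¹ :=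
      inv_anti₀ (by linarith) (by linarith)
    have h3 : ‖w‖ ^ 2 * (1 - ‖w‖)⁻¹ / 2 ≤ ‖w‖ * (t * (1 - t)⁻¹ / 2) := by
      have i0 : 0 ≤ (1 - ‖w‖)⁻¹ := inv_nonneg.mpr (by linarith)
      have s0 : 0 ≤ ‖w‖ := norm_nonneg w
      nlinarith [mul_le_mul hwt hinv i0 ht0.le, s0]
    calc ‖Complex.log ((1 - w)⁻¹)‖ ≤ ‖w‖ * (t * (1 - t)⁻¹ / 2) + ‖w‖ := by linarith
      _ = K * ‖w‖ := by rw [hK]; ring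
      _ = K * t ^ n.toNat := by rw [hwn]
  apply Summable.of_norm_bounded ?_ hbound
  have hgeo : Summable (fun N : ℕ => K * t ^ N) :=
    (summable_geometric_of_lt_one ht0.le ht1).mul_left K
  have hinj : Function.Injective (fun n : {n : ℤ // P n} => (n : ℤ).toNat) := by
    intro p q h
    have h2 : (p : ℤ).toNat = (q : ℤ).toNat := h
    have hp := hP p p.prop
    have hq := hP q q.prop
    exact Subtype.ext (by omega)
  exact hgeo.comp_injective hinj

lemma ne_zero_aux (z : UpperHalfPlane) (n : ℤ) (hn : 0 < n) :
    (1 - Complex.exp (2 * (π : ℂ) * Complex.I * ((n : ℤ) : ℂ) * (z : ℂ)))⁻¹ ≠ 0 := by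
  apply inv_ne_zero
  intro h
  have h1 : Complex.exp (2 * (π : ℂ) * Complex.I * ((n : ℤ) : ℂ) * (z : ℂ)) = 1 := by
    have := sub_eq_zero.mp h; exact this.symm
  have h2 := norm_q z n hn
  rw [h1] at h2
  have ht0 : (0:ℝ) < Real.exp (-(2 * π * z.im)) := Real.exp_pos _
  have ht1 : Real.exp (-(2 * π * z.im)) < 1 := by
    rw [Real.exp_lt_one_iff]
    have := z.im_pos
    nlinarith [Real.pi_pos]
  have hN1 : 1 ≤ n.toNat := by omega
  have : Real.exp (-(2 * π * z.im)) ^ n.toNat < 1 :=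
    pow_lt_one₀ ht0.le ht1 (by omega)
  rw [← h2] at this
  simp at this

lemma mult_aux (z : UpperHalfPlane) (P : ℤ → Prop) (hP : ∀ n, P n → 0 < n) :
    Multipliable fun n : {n : ℤ // P n} =>
      (1 - Complex.exp (2 * (π : ℂ) * Complex.I * ((n : ℤ) : ℂ) * (z : ℂ)))⁻¹ := by
  exact Complex.multipliable_of_summable_log (summable_log_aux z P hP)

lemma bern_sum (l m k : ℕ) (hl : 0 < l) (hk : 0 < k) (hm : m = l * k) (r : ℤ) :
    ∑ j ∈ Finset.range k,
      (-((((m:ℕ):ℤ):ℝ) * bern ((((r + (l:ℤ)*(j:ℕ)) : ℤ):ℝ) / (((m:ℕ):ℤ):ℝ)) / 2))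
      = -((((l:ℕ):ℤ):ℝ) * bern ((r:ℝ) / (((l:ℕ):ℤ):ℝ)) / 2) := by
  have hl0 : (0:ℝ) < l := by exact_mod_cast hl
  have hk0 : (0:ℝ) < k := by exact_mod_cast hk
  have h1 : ∀ j ∈ Finset.range k,
      (-((((m:ℕ):ℤ):ℝ) * bern ((((r + (l:ℤ)*(j:ℕ)) : ℤ):ℝ) / (((m:ℕ):ℤ):ℝ)) / 2))
        = (-(((m:ℕ):ℝ)/2)) * bern ((r:ℝ)/((l:ℝ)*(k:ℝ)) + (j:ℝ)/(k:ℝ)) := by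
    intro j _
    have harg : (((r + (l:ℤ)*(j:ℕ)) : ℤ):ℝ) / (((m:ℕ):ℤ):ℝ)
        = (r:ℝ)/((l:ℝ)*(k:ℝ)) + (j:ℝ)/(k:ℝ) := by
      subst hm; push_cast; field_simp
    rw [harg]; push_cast; ring
  rw [Finset.sum_congr rfl h1, ← Finset.mul_sum,
    bern_dist k hk ((r:ℝ)/((l:ℝ)*(k:ℝ))),
    show (k:ℝ) * ((r:ℝ)/((l:ℝ)*(k:ℝ))) = (r:ℝ)/((l:ℝ)) from by field_simp]
  subst hm; push_cast
  field_simp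

lemma exp_eq (l m k : ℕ) (hl : 0 < l) (hk : 0 < k) (hm : m = l * k) (r : ℤ)
    (z : UpperHalfPlane) :
    Complex.exp (2 * (π : ℂ) * Complex.I *
        ((-((((l:ℕ):ℤ):ℝ) * bern ((r:ℝ) / (((l:ℕ):ℤ):ℝ)) / 2) : ℝ) : ℂ) * (z : ℂ))
      = ∏ j ∈ Finset.range k, Complex.exp (2 * (π : ℂ) * Complex.I *
          ((-((((m:ℕ):ℤ):ℝ) * bern ((((r + (l:ℤ)*(j:ℕ)) : ℤ):ℝ) / (((m:ℕ):ℤ):ℝ)) / 2) : ℝ) : ℂ)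
          * (z : ℂ)) := by
  rw [← Complex.exp_sum]
  congr 1
  rw [← Finset.sum_mul, ← Finset.mul_sum, ← Complex.ofReal_sum]
  congr 2
  rw [Complex.ofReal_inj]
  exact (bern_sum l m k hl hk hm r).symm

/-- Distribution relations: for `l | m` and `l ∤ r`,
`[r]_l = ∏_s [s]_m`, where `s` runs over the representatives `r + l·j`, `0 ≤ j < m/l`, of the
residue classes modulo `m` which are congruent to `r` modulo `l`. -/
theorem sl2z_invariant_units_stmt19 (l m : ℕ) (hl : 0 < l) (hm : 0 < m) (hlm : l ∣ m)
    (r : ℤ) (hr : ¬ (l : ℤ) ∣ r) :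
    ∀ z : UpperHalfPlane,
      rl l r z = ∏ j ∈ Finset.range (m / l), rl m (r + (l : ℤ) * (j : ℤ)) z := by
  intro z
  set k := m / l with hkdef
  have hk0 : 0 < k := Nat.div_pos (Nat.le_of_dvd hm hlm) hl
  have hmk : m = l * k := (Nat.mul_div_cancel' hlm).symm
  have hlm' : (l : ℤ) ∣ (m : ℤ) := Int.natCast_dvd_natCast.mpr ⟨k, hmk⟩
  -- exp part
  have hE := exp_eq l m k hl hk0 hmk r z
  -- P part
  have hcP : ∀ (j : ℕ) (n : ℤ), n ≡ r + (l:ℤ)*(j:ℕ) [ZMOD ((m:ℕ):ℤ)] →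
      n ≡ r [ZMOD ((l:ℕ):ℤ)] := by
    intro j n h
    exact (h.of_dvd hlm').trans (Int.modEq_iff_dvd.mpr ⟨-(j:ℤ), by ring⟩)
  have hcuP : ∀ n : ℤ, n ≡ r [ZMOD ((l:ℕ):ℤ)] →
      ∃! j : Fin k, n ≡ r + (l:ℤ)*((j:ℕ):ℤ) [ZMOD ((m:ℕ):ℤ)] := by
    intro n hn
    have h := exists_unique_j l k hl hk0 1 r (by ring) n hn
    simpa [← hmk, one_mul] using h
  have hP : (∏' n : {n : ℤ // 0 < n ∧ n ≡ r [ZMOD ((l:ℕ):ℤ)]},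
        (1 - Complex.exp (2 * (π : ℂ) * Complex.I * ((n : ℤ) : ℂ) * (z : ℂ)))⁻¹)
      = ∏ j ∈ Finset.range k,
          ∏' n : {n : ℤ // 0 < n ∧ n ≡ r + (l:ℤ)*(j:ℕ) [ZMOD ((m:ℕ):ℤ)]},
            (1 - Complex.exp (2 * (π : ℂ) * Complex.I * ((n : ℤ) : ℂ) * (z : ℂ)))⁻¹ :=
    regroup (fun n : ℤ => (1 - Complex.exp (2 * (π : ℂ) * Complex.I * ((n : ℤ) : ℂ) * (z : ℂ)))⁻¹)
      l m k r (fun j => r + (l:ℤ)*(j:ℕ)) hcP hcuP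
      (mult_aux z _ (fun n hn => hn.1)) (fun j => mult_aux z _ (fun n hn => hn.1))
  -- Q part
  have hcQ : ∀ (j : ℕ) (n : ℤ), n ≡ -(r + (l:ℤ)*(j:ℕ)) [ZMOD ((m:ℕ):ℤ)] →
      n ≡ -r [ZMOD ((l:ℕ):ℤ)] := by
    intro j n h
    exact (h.of_dvd hlm').trans (Int.modEq_iff_dvd.mpr ⟨(j:ℤ), by ring⟩)
  have hcuQ : ∀ n : ℤ, n ≡ -r [ZMOD ((l:ℕ):ℤ)] →
      ∃! j : Fin k, n ≡ -(r + (l:ℤ)*((j:ℕ):ℤ)) [ZMOD ((m:ℕ):ℤ)] := by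
    intro n hn
    have harg : ∀ jj : ℤ, -(r + (l:ℤ)*jj) = -r + (-1)*(l:ℤ)*jj := fun jj => by ring
    have hmm : ((m:ℕ):ℤ) = ((l*k:ℕ):ℤ) := by rw [hmk]
    simp only [harg, hmm]
    exact exists_unique_j l k hl hk0 (-1) (-r) (by ring) n hn
  have hQ : (∏' n : {n : ℤ // 0 < n ∧ n ≡ -r [ZMOD ((l:ℕ):ℤ)]},
        (1 - Complex.exp (2 * (π : ℂ) * Complex.I * ((n : ℤ) : ℂ) * (z : ℂ)))⁻¹)
      = ∏ j ∈ Finset.range k,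
          ∏' n : {n : ℤ // 0 < n ∧ n ≡ -(r + (l:ℤ)*(j:ℕ)) [ZMOD ((m:ℕ):ℤ)]},
            (1 - Complex.exp (2 * (π : ℂ) * Complex.I * ((n : ℤ) : ℂ) * (z : ℂ)))⁻¹ :=
    regroup (fun n : ℤ => (1 - Complex.exp (2 * (π : ℂ) * Complex.I * ((n : ℤ) : ℂ) * (z : ℂ)))⁻¹)
      l m k (-r) (fun j => -(r + (l:ℤ)*(j:ℕ))) hcQ hcuQ
      (mult_aux z _ (fun n hn => hn.1)) (fun j => mult_aux z _ (fun n hn => hn.1))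
  simp only [rl]
  rw [Finset.prod_mul_distrib, Finset.prod_mul_distrib, hE, hP, hQ]
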